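/- Conditional completeness of certifying synthesis with local strategies: Let φ be an LTL formula over V with decomposition ⟨φ_1,…,φ_n⟩ and S = ⟨s_1,…,s_n⟩ a vector of strategies for the system processes. If s_1 ∥ … ∥ s_n ⊨ φ and prop(φ_i) ⊆ V_i holds for all system processes p_i, then there exists a vector G of guarantee transition systems such that (S',G) is a solution of certifying synthesis with local strategies for φ, where S' = ⟨s'_1,…,s'_n⟩ with s'_i the restriction of s_i w.r.t. G. -/
import Mathlib


namespace CertSynth

/-- Syntax of LTL formulas over atomic propositions `V`. -/
inductive LTL (V : Type) : Type
  | atom : V → LTL V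
  | neg : LTL V → LTL V
  | disj : LTL V → LTL V → LTL V
  | conj : LTL V → LTL V → LTL V
  | next : LTL V → LTL V
  | untl : LTL V → LTL V → LTL V

namespace LTL

variable {V : Type}

/-- Standard semantics of LTL over infinite words in `(2^V)^ω`. -/
def sat : (ℕ → Set V) → LTL V → Prop
  | σ, atom a => a ∈ σ 0
  | σ, neg φ => ¬ sat σ φ
  | σ, disj φ ψ => sat σ φ ∨ sat σ ψ
  | σ, conj φ ψ => sat σ φ ∧ sat σ ψ
  | σ, next φ => sat (fun k => σ (k + 1)) φ
  | σ, untl φ ψ => ∃ t, sat (fun k => σ (k + t)) ψ ∧ ∀ u < t, sat (fun k => σ (k + u)) φ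

/-- The atomic propositions occurring in a formula. -/
def props : LTL V → Set V
  | atom a => {a}
  | neg φ => props φ
  | disj φ ψ => props φ ∪ props ψ
  | conj φ ψ => props φ ∪ props ψ
  | next φ => props φ
  | untl φ ψ => props φ ∪ props ψ

end LTL

/-- A Moore transition system over inputs `I` and outputs `O`: a finite state set,
an initial state, a (total) transition function reading letters in `2^I` and a
labeling function producing letters in `2^O`. -/
structure Moore (V : Type) (I O : Set V) where
  S : Type
  finS : Finite S
  init : S
  trans : S → Set V → S
  label : S → Set V
  label_sub : ∀ t, label t ⊆ O

namespace Moore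

variable {V : Type} {I O : Set V}

/-- The run of a Moore transition system on an input sequence. -/
def run (m : Moore V I O) (γ : ℕ → Set V) : ℕ → m.S
  | 0 => m.init
  | k + 1 => m.trans (run m γ k) (γ k ∩ I)

/-- The computation `comp(m,γ)` of `m` on the input sequence `γ`: its `k`-th letter
is the `k`-th input letter joined with the label of the `k`-th state of the run. -/
def comp (m : Moore V I O) (γ : ℕ → Set V) (k : ℕ) : Set V :=
  (γ k ∩ I) ∪ m.label (m.run γ k)

end Moore

/-- Simulation `T₂ ≼_{O₁} T₁` of Moore transition systems over the same inputs `I`. -/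
def Sim {V : Type} {I O₁ O₂ : Set V} (T₂ : Moore V I O₂) (T₁ : Moore V I O₁) : Prop :=
  ∃ R : T₂.S → T₁.S → Prop,
    R T₂.init T₁.init ∧
    (∀ t₂ t₁, R t₂ t₁ → T₂.label t₂ ∩ O₁ = T₁.label t₁) ∧
    (∀ t₂ t₁ a, a ⊆ I → R t₂ t₁ → R (T₂.trans t₂ a) (T₁.trans t₁ a))

/-- A Moore transition system with a partial transition function. -/
structure PMoore (V : Type) (I O : Set V) where
  S : Type
  finS : Finite S
  init : S
  trans : S → Set V → Option S
  label : S → Set V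
  label_sub : ∀ t, label t ⊆ O

namespace PMoore

variable {V : Type} {I O : Set V}

/-- The (partial) run of a partial Moore transition system on an input sequence. -/
def prun (m : PMoore V I O) (γ : ℕ → Set V) : ℕ → Option m.S
  | 0 => some m.init
  | k + 1 => (prun m γ k).bind fun st => m.trans st (γ k ∩ I)

/-- The computation of `m` on `γ` is infinite. -/
def Inf (m : PMoore V I O) (γ : ℕ → Set V) : Prop := ∀ k, (m.prun γ k).isSome

/-- The computation of `m` on `γ` (defaulting to the input letter after the
computation has ended). -/
def compD (m : PMoore V I O) (γ : ℕ → Set V) (k : ℕ) : Set V :=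
  (γ k ∩ I) ∪ (match m.prun γ k with | some st => m.label st | none => ∅)

/-- The finite or infinite word `comp(m,γ) ∪ γ'`. -/
def pcomp (m : PMoore V I O) (γ γ' : ℕ → Set V) (k : ℕ) : Option (Set V) :=
  (m.prun γ k).map fun st => (γ k ∩ I) ∪ m.label st ∪ γ' k

end PMoore

/-- Simulation of a partial Moore transition system by a complete one. -/
def PSim {V : Type} {I O₁ O₂ : Set V} (T₂ : PMoore V I O₂) (T₁ : Moore V I O₁) : Prop :=
  ∃ R : T₂.S → T₁.S → Prop,
    R T₂.init T₁.init ∧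
    (∀ t₂ t₁, R t₂ t₁ → T₂.label t₂ ∩ O₁ = T₁.label t₁) ∧
    (∀ t₂ t₁ a, a ⊆ I → R t₂ t₁ → ∀ t₂', T₂.trans t₂ a = some t₂' → R t₂' (T₁.trans t₁ a))

/-- A distributed architecture with `n ≥ 2` system processes over the finite set `V`
of variables: input and output variables for every system process, output variables
of the environment, with the required disjointness conditions, `V = ⋃ᵢ Vᵢ`, and
`inp ∖ out = O_env`. -/
structure Arch (V : Type) (n : ℕ) where
  I : Fin n → Set V
  O : Fin n → Set V
  Oenv : Set V
  two_le : 2 ≤ n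
  disj_IO : ∀ i, Disjoint (I i) (O i)
  disj_O : ∀ i j, i ≠ j → Disjoint (O i) (O j)
  disj_Oenv : ∀ i, Disjoint Oenv (O i)
  cover : ∀ v : V, ∃ i, v ∈ I i ∪ O i
  env_eq : (⋃ i, I i) \ (⋃ i, O i) = Oenv

namespace Arch

variable {V : Type} {n : ℕ}

/-- The variables `Vᵢ = Iᵢ ∪ Oᵢ` of process `i`. -/
def Vars (A : Arch V n) (i : Fin n) : Set V := A.I i ∪ A.O i

/-- `inp`, the union of the inputs of all system processes. -/
def inp (A : Arch V n) : Set V := ⋃ i, A.I i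

/-- `out`, the union of the outputs of all system processes. -/
def out (A : Arch V n) : Set V := ⋃ i, A.O i

/-- The guarantee output variables `OGᵢ = Oᵢ ∩ inp` of process `i`. -/
def Og (A : Arch V n) (i : Fin n) : Set V := A.O i ∩ A.inp

end Arch

section Defs

variable {V : Type} {n : ℕ}

/-- A strategy for system process `i`: a Moore TS over `Iᵢ` and `Oᵢ`. -/
abbrev Strategy (A : Arch V n) (i : Fin n) := Moore V (A.I i) (A.O i)

/-- A guarantee transition system (GTS) for process `i`: a Moore TS over `Iᵢ` and `OGᵢ`. -/
abbrev GTS (A : Arch V n) (i : Fin n) := Moore V (A.I i) (A.Og i)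

/-- A (candidate) local strategy for process `i`: a partial Moore TS over `Iᵢ` and `Oᵢ`. -/
abbrev LocalStrategy (A : Arch V n) (i : Fin n) := PMoore V (A.I i) (A.O i)

/-- The parallel composition `s₁ ∥ … ∥ sₙ`: product state space, componentwise
transitions where each component receives the environment inputs together with the
outputs of the other components, and the union of the labelings as labels. -/
def par (A : Arch V n) (s : ∀ i, Strategy A i) : Moore V A.Oenv A.out where
  S := ∀ i, (s i).S
  finS := by
    haveI : ∀ i, Finite ((s i).S) := fun i => (s i).finS
    infer_instance
  init := fun i => (s i).init
  trans := fun st a i => (s i).trans (st i) ((a ∪ ⋃ j, (s j).label (st j)) ∩ A.I i)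
  label := fun st => ⋃ i, (s i).label (st i)
  label_sub := fun st => Set.iUnion_mono fun i => (s i).label_sub (st i)

open Classical in
/-- The parallel composition of partial Moore transition systems. -/
noncomputable def pPar (A : Arch V n) (s : ∀ i, LocalStrategy A i) :
    PMoore V A.Oenv A.out where
  S := ∀ i, (s i).S
  finS := by
    haveI : ∀ i, Finite ((s i).S) := fun i => (s i).finS
    infer_instance
  init := fun i => (s i).init
  trans := fun st a =>
    if h : ∀ i, ((s i).trans (st i) ((a ∪ ⋃ j, (s j).label (st j)) ∩ A.I i)).isSome then
      some fun i => ((s i).trans (st i) ((a ∪ ⋃ j, (s j).label (st j)) ∩ A.I i)).get (h i)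
    else none
  label := fun st => ⋃ i, (s i).label (st i)
  label_sub := fun st => Set.iUnion_mono fun i => (s i).label_sub (st i)

/-- `σ ⊨ Φ` for a specification `Φ = ξ₁ ∧ … ∧ ξₖ` given by its list of conjuncts. -/
def satSpec (Φ : List (LTL V)) (σ : ℕ → Set V) : Prop := ∀ ξ ∈ Φ, LTL.sat σ ξ

/-- `ξ` is a conjunct of the subspecification `φᵢ` of the decomposition of `Φ`:
it is a conjunct of `Φ` that mentions an output of `pᵢ` or no output at all. -/
def inDecomp (A : Arch V n) (Φ : List (LTL V)) (i : Fin n) (ξ : LTL V) : Prop :=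
  ξ ∈ Φ ∧ ((ξ.props ∩ A.O i).Nonempty ∨ ξ.props ∩ A.out = ∅)

/-- `σ ⊨ φᵢ`, where `φᵢ` is the `i`-th subspecification of the decomposition of `Φ`. -/
def satDecomp (A : Arch V n) (Φ : List (LTL V)) (i : Fin n) (σ : ℕ → Set V) : Prop :=
  ∀ ξ, inDecomp A Φ i ξ → LTL.sat σ ξ

/-- The atomic propositions `prop(φᵢ)` of the `i`-th subspecification. -/
def propsDecomp (A : Arch V n) (Φ : List (LTL V)) (i : Fin n) : Set V :=
  {v | ∃ ξ, inDecomp A Φ i ξ ∧ v ∈ ξ.props}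

/-- The relevant processes `Rᵢ = { pⱼ | j ≠ i, Oⱼ ∩ prop(φᵢ) ≠ ∅ }` of process `i`. -/
def Rel (A : Arch V n) (Φ : List (LTL V)) (i : Fin n) : Set (Fin n) :=
  {j | j ≠ i ∧ (A.O j ∩ propsDecomp A Φ i).Nonempty}

/-- The word `comp(sᵢ,γ) ∪ γ'`. -/
def cword (A : Arch V n) {i : Fin n} (s : Strategy A i) (γ γ' : ℕ → Set V) : ℕ → Set V :=
  fun k => s.comp γ k ∪ γ' k

/-- `sᵢ ⊨ ψ`: every computation of `sᵢ`, joined with arbitrary valuations of the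
variables outside `Vᵢ`, satisfies `ψ`. -/
def StratSat (A : Arch V n) {i : Fin n} (s : Strategy A i) (ψ : LTL V) : Prop :=
  ∀ γ γ' : ℕ → Set V, (∀ k, γ k ⊆ A.I i) → (∀ k, γ' k ⊆ (A.Vars i)ᶜ) →
    LTL.sat (cword A s γ γ') ψ

/-- `(S,Ψ)` is a solution of certifying synthesis with LTL certificates for `Φ`,
where process `i` uses the certificates of the processes in `J i`:
`sᵢ ⊨ ψᵢ ∧ (⋀_{j ∈ J i} ψⱼ → φᵢ)` for every system process `i`. -/
def CertSolLTLWith (A : Arch V n) (Φ : List (LTL V)) (s : ∀ i, Strategy A i)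
    (ψ : Fin n → LTL V) (J : Fin n → Set (Fin n)) : Prop :=
  ∀ i, ∀ γ γ' : ℕ → Set V, (∀ k, γ k ⊆ A.I i) → (∀ k, γ' k ⊆ (A.Vars i)ᶜ) →
    LTL.sat (cword A (s i) γ γ') (ψ i) ∧
      ((∀ j ∈ J i, LTL.sat (cword A (s i) γ γ') (ψ j)) →
        satDecomp A Φ i (cword A (s i) γ γ'))

/-- `(S,Ψ)` is a solution of certifying synthesis with LTL certificates for `Φ`. -/
def CertSolLTL (A : Arch V n) (Φ : List (LTL V)) (s : ∀ i, Strategy A i)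
    (ψ : Fin n → LTL V) : Prop :=
  CertSolLTLWith A Φ s ψ (fun i => {j | j ≠ i})

/-- `(S,Ψ)_R` is a solution of certifying synthesis with relevant processes for `Φ`. -/
def CertSolLTLR (A : Arch V n) (Φ : List (LTL V)) (s : ∀ i, Strategy A i)
    (ψ : Fin n → LTL V) : Prop :=
  CertSolLTLWith A Φ s ψ (fun i => Rel A Φ i)

/-- The first `t` letters of `σ` form a valid history w.r.t. the GTSs `{g j | j ∈ J}`:
for every `j ∈ J`, every position `k < t` and every infinite extension of the
length-`t` prefix of `σ`, the letters agree on `OGⱼ` with the computation of `g j`. -/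
def ValidHist (A : Arch V n) (g : ∀ j, GTS A j) (J : Set (Fin n)) (t : ℕ)
    (σ : ℕ → Set V) : Prop :=
  ∀ j ∈ J, ∀ k < t, ∀ σh : ℕ → Set V, (∀ l < t, σh l = σ l) →
    σ k ∩ A.Og j = (g j).comp σh k ∩ A.Og j

/-- `sᵢ` locally satisfies `φᵢ` w.r.t. the GTSs of the processes in `J`. -/
def LocalSat (A : Arch V n) (Φ : List (LTL V)) {i : Fin n} (s : Strategy A i)
    (g : ∀ j, GTS A j) (J : Set (Fin n)) : Prop :=
  ∀ γ γ' : ℕ → Set V, (∀ k, γ k ⊆ A.I i) → (∀ k, γ' k ⊆ (A.Vars i)ᶜ) →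
    (∀ t, ValidHist A g J t (cword A s γ γ')) →
    satDecomp A Φ i (cword A s γ γ')

/-- `(S,G)` is a solution of certifying synthesis with guarantee transition systems,
where process `i` uses the guarantees of the processes in `J i`. -/
def CertSolGTSWith (A : Arch V n) (Φ : List (LTL V)) (s : ∀ i, Strategy A i)
    (g : ∀ i, GTS A i) (J : Fin n → Set (Fin n)) : Prop :=
  ∀ i, Sim (s i) (g i) ∧ LocalSat A Φ (s i) g (J i)

/-- `(S,G)` is a solution of certifying synthesis with guarantee transition systems
(equivalently, with local satisfaction) for `Φ`. -/
def CertSolGTS (A : Arch V n) (Φ : List (LTL V)) (s : ∀ i, Strategy A i)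
    (g : ∀ i, GTS A i) : Prop :=
  CertSolGTSWith A Φ s g (fun i => {j | j ≠ i})

/-- `(S,G)_R` is a solution of certifying synthesis with relevant processes for `Φ`. -/
def CertSolGTSR (A : Arch V n) (Φ : List (LTL V)) (s : ∀ i, Strategy A i)
    (g : ∀ i, GTS A i) : Prop :=
  CertSolGTSWith A Φ s g (fun i => Rel A Φ i)

/-- The copy of the strategy `s` whose labels are restricted to the guarantee
output variables `OGᵢ`. -/
def toGTS (A : Arch V n) {i : Fin n} (s : Strategy A i) : GTS A i where
  S := s.S
  finS := s.finS
  init := s.init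
  trans := s.trans
  label := fun t => s.label t ∩ A.Og i
  label_sub := fun _ => Set.inter_subset_right

/-- `s₁ ∥ … ∥ sₙ ⊨ Φ`. -/
def ParSat (A : Arch V n) (s : ∀ i, Strategy A i) (Φ : List (LTL V)) : Prop :=
  ∀ γ γ' : ℕ → Set V, (∀ k, γ k ⊆ A.Oenv) → (∀ k, γ' k ⊆ (A.Oenv ∪ A.out)ᶜ) →
    satSpec Φ (fun k => (par A s).comp γ k ∪ γ' k)

/-- A universal co-Büchi automaton over the alphabet `2^V`. -/
structure UCB (V : Type) where
  Q : Type
  finQ : Finite Q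
  init : Q
  δ : Q → Set V → Q → Prop
  F : Set Q

/-- The word `σ` is accepted by the universal co-Büchi automaton `Aut`:
every run of `σ` visits rejecting states only finitely often. -/
def UCB.accepts (Aut : UCB V) (σ : ℕ → Set V) : Prop :=
  ∀ r : ℕ → Aut.Q, r 0 = Aut.init → (∀ k, Aut.δ (r k) (σ k) (r (k + 1))) →
    {k | r k ∈ Aut.F}.Finite

/-- Every (finite or infinite) run of `Aut` induced by the possibly finite word `w`
contains only finitely many visits to rejecting states. -/
def UCB.RunsOk (Aut : UCB V) (w : ℕ → Option (Set V)) : Prop :=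
  ∀ r : ℕ → Aut.Q, r 0 = Aut.init →
    (∀ k a, w k = some a → Aut.δ (r k) a (r (k + 1))) →
    {k | r k ∈ Aut.F ∧ ∀ l < k, (w l).isSome}.Finite

/-- `s` is a local strategy for process `i` w.r.t. the GTSs `{g j | j ∈ J}`:
its computation on `γ` is infinite iff some valuation `γ'` of the remaining
variables makes all prefixes of `comp(s,γ) ∪ γ'` valid histories. -/
def IsLocalStrategy (A : Arch V n) {i : Fin n} (g : ∀ j, GTS A j) (J : Set (Fin n))
    (s : LocalStrategy A i) : Prop :=
  ∀ γ : ℕ → Set V, (∀ k, γ k ⊆ A.I i) →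
    (s.Inf γ ↔ ∃ γ' : ℕ → Set V, (∀ k, γ' k ⊆ (A.Vars i)ᶜ) ∧
      ∀ t, ValidHist A g J t (fun k => s.compD γ k ∪ γ' k))

/-- `(S,G)` is a solution of certifying synthesis with local strategies for `Φ`:
for every system process `i`, `sᵢ ≼_{OGᵢ} gᵢ` and, for every universal co-Büchi
automaton with `L(Aᵢ) = L(φᵢ)`, all runs induced by `comp(sᵢ,γ) ∪ γ'` contain only
finitely many visits to rejecting states. -/
def CertSolLocal (A : Arch V n) (Φ : List (LTL V)) (s : ∀ i, LocalStrategy A i)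
    (g : ∀ i, GTS A i) : Prop :=
  ∀ i, PSim (s i) (g i) ∧
    ∀ Aut : UCB V, (∀ σ : ℕ → Set V, Aut.accepts σ ↔ satDecomp A Φ i σ) →
      ∀ γ γ' : ℕ → Set V, (∀ k, γ k ⊆ A.I i) → (∀ k, γ' k ⊆ (A.Vars i)ᶜ) →
        Aut.RunsOk ((s i).pcomp γ γ')

/-- `s'` is the extension of the local strategy `s` w.r.t. `G`: it behaves like `s`
on inputs with infinite computation and like the own guarantee `gᵢ` (joined with some
valuation of the non-guarantee outputs) otherwise. -/
def IsExtension (A : Arch V n) {i : Fin n} (s : LocalStrategy A i) (gi : GTS A i)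
    (s' : Strategy A i) : Prop :=
  ∀ γ : ℕ → Set V, (∀ k, γ k ⊆ A.I i) →
    (s.Inf γ → ∀ k, s'.comp γ k = s.compD γ k) ∧
    (¬ s.Inf γ → ∃ σ' : ℕ → Set V, (∀ k, σ' k ⊆ A.O i \ A.Og i) ∧
      ∀ k, s'.comp γ k = gi.comp γ k ∪ σ' k)

/-- `s'` is the restriction of the complete strategy `s` to a local strategy w.r.t.
the GTSs `{g j | j ∈ J}`: a copy of `s` whose computation on `γ` is infinite iff some
valuation `γ'` of the remaining variables makes all prefixes of `comp(s,γ) ∪ γ'`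
valid histories. -/
def IsRestriction (A : Arch V n) {i : Fin n} (g : ∀ j, GTS A j) (J : Set (Fin n))
    (s : Strategy A i) (s' : LocalStrategy A i) : Prop :=
  ∀ γ : ℕ → Set V, (∀ k, γ k ⊆ A.I i) →
    (∀ k, (s'.prun γ k).isSome → s'.compD γ k = s.comp γ k) ∧
    (s'.Inf γ ↔ ∃ γ' : ℕ → Set V, (∀ k, γ' k ⊆ (A.Vars i)ᶜ) ∧
      ∀ t, ValidHist A g J t (cword A s γ γ'))

/-- `s₁ ∥ … ∥ sₙ ⊨ Φ` for local strategies: all computations of the parallel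
composition are infinite and satisfy `Φ`. -/
def PParSat (A : Arch V n) (s : ∀ i, LocalStrategy A i) (Φ : List (LTL V)) : Prop :=
  ∀ γ γ' : ℕ → Set V, (∀ k, γ k ⊆ A.Oenv) → (∀ k, γ' k ⊆ (A.Oenv ∪ A.out)ᶜ) →
    (pPar A s).Inf γ ∧ satSpec Φ (fun k => (pPar A s).compD γ k ∪ γ' k)

end Defs


section AuxProof

variable {V : Type} {n : ℕ}

lemma sat_congr (ξ : LTL V) : ∀ σ₁ σ₂ : ℕ → Set V,
    (∀ k v, v ∈ ξ.props → (v ∈ σ₁ k ↔ v ∈ σ₂ k)) → (LTL.sat σ₁ ξ ↔ LTL.sat σ₂ ξ) := by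
  induction ξ with
  | atom a =>
      intro σ₁ σ₂ h
      simpa [LTL.sat] using h 0 a (by simp [LTL.props])
  | neg φ ih =>
      intro σ₁ σ₂ h
      simp only [LTL.sat]
      rw [ih σ₁ σ₂ (fun k v hv => h k v hv)]
  | disj φ ψ ihφ ihψ =>
      intro σ₁ σ₂ h
      simp only [LTL.sat]
      rw [ihφ σ₁ σ₂ (fun k v hv => h k v (Set.mem_union_left _ hv)),
        ihψ σ₁ σ₂ (fun k v hv => h k v (Set.mem_union_right _ hv))]
  | conj φ ψ ihφ ihψ =>
      intro σ₁ σ₂ h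
      simp only [LTL.sat]
      rw [ihφ σ₁ σ₂ (fun k v hv => h k v (Set.mem_union_left _ hv)),
        ihψ σ₁ σ₂ (fun k v hv => h k v (Set.mem_union_right _ hv))]
  | next φ ih =>
      intro σ₁ σ₂ h
      simp only [LTL.sat]
      exact ih _ _ (fun k v hv => h (k + 1) v hv)
  | untl φ ψ ihφ ihψ =>
      intro σ₁ σ₂ h
      simp only [LTL.sat]
      exact exists_congr fun t =>
        and_congr (ihψ _ _ fun k v hv => h (k + t) v (Set.mem_union_right _ hv))
          (forall_congr' fun u => imp_congr_right fun _ =>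
            ihφ _ _ fun k v hv => h (k + u) v (Set.mem_union_left _ hv))

lemma run_congr {I O : Set V} (m : Moore V I O) (γ₁ γ₂ : ℕ → Set V)
    (h : ∀ k, γ₁ k ∩ I = γ₂ k ∩ I) : ∀ k, m.run γ₁ k = m.run γ₂ k := by
  intro k
  induction k with
  | zero => rfl
  | succ k ih => simp only [Moore.run, ih, h]

lemma run_prefix {I O : Set V} (m : Moore V I O) (γ₁ γ₂ : ℕ → Set V) :
    ∀ k, (∀ l, l < k → γ₁ l = γ₂ l) → m.run γ₁ k = m.run γ₂ k := by
  intro k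
  induction k with
  | zero => intro _; rfl
  | succ k ih =>
      intro h
      simp only [Moore.run, ih (fun l hl => h l (hl.trans (Nat.lt_succ_self k))),
        h k (Nat.lt_succ_self k)]

lemma prun_prefix {I O : Set V} (m : PMoore V I O) (γ₁ γ₂ : ℕ → Set V) :
    ∀ k, (∀ l, l < k → γ₁ l = γ₂ l) → m.prun γ₁ k = m.prun γ₂ k := by
  intro k
  induction k with
  | zero => intro _; rfl
  | succ k ih =>
      intro h
      simp only [PMoore.prun, ih (fun l hl => h l (hl.trans (Nat.lt_succ_self k))),
        h k (Nat.lt_succ_self k)]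

lemma union_cancel {X C D : Set V} (hC : Disjoint X C) (hD : Disjoint X D)
    (h : X ∪ C = X ∪ D) : C = D := by
  ext v
  have h' : v ∈ X ∪ C ↔ v ∈ X ∪ D := by rw [h]
  simp only [Set.mem_union] at h'
  constructor
  · intro hv
    rcases h'.mp (Or.inr hv) with hx | hd
    · exact absurd hv (Set.disjoint_left.mp hC hx)
    · exact hd
  · intro hv
    rcases h'.mpr (Or.inr hv) with hx | hc
    · exact absurd hv (Set.disjoint_left.mp hD hx)
    · exact hc

lemma key_satDecomp (A : Arch V n) (Φ : List (LTL V)) (s : ∀ i, Strategy A i)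
    (hsat : ParSat A s Φ) (hprops : ∀ i, propsDecomp A Φ i ⊆ A.Vars i) (i : Fin n)
    (γ γ₀' : ℕ → Set V) (hγ : ∀ k, γ k ⊆ A.I i) (hγ₀' : ∀ k, γ₀' k ⊆ (A.Vars i)ᶜ)
    (hvalid : ∀ t, ValidHist A (fun j => toGTS A (s j)) {j | j ≠ i} t (cword A (s i) γ γ₀')) :
    satDecomp A Φ i (cword A (s i) γ γ₀') := by
  classical
  set σ : ℕ → Set V := cword A (s i) γ γ₀' with hσdef
  have hσmem : ∀ k v, v ∈ σ k ↔
      (v ∈ γ k ∧ v ∈ A.I i) ∨ v ∈ (s i).label ((s i).run γ k) ∨ v ∈ γ₀' k := by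
    intro k v
    simp [hσdef, cword, Moore.comp, Set.mem_union, Set.mem_inter_iff, or_assoc]
  -- run of the GTS copies equals run of the strategies
  have hrunG : ∀ j (τ : ℕ → Set V) m, (toGTS A (s j)).run τ m = (s j).run τ m := by
    intro j τ m
    induction m with
    | zero => rfl
    | succ m ih => simp only [Moore.run, ih]; rfl
  -- Step A: valid histories pin down the guarantee outputs of the other processes
  have hA : ∀ j, j ≠ i → ∀ k v, v ∈ A.Og j →
      (v ∈ σ k ↔ v ∈ (s j).label ((s j).run σ k)) := by
    intro j hj k v hOg
    have h := hvalid (k + 1) j hj k (Nat.lt_succ_self k) σ (fun l _ => rfl)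
    have hv1 : v ∈ σ k ↔ v ∈ (toGTS A (s j)).comp σ k := by
      constructor
      · intro hv
        have : v ∈ σ k ∩ A.Og j := ⟨hv, hOg⟩
        rw [h] at this
        exact this.1
      · intro hv
        have : v ∈ (toGTS A (s j)).comp σ k ∩ A.Og j := ⟨hv, hOg⟩
        rw [← h] at this
        exact this.1
    have hOj : v ∈ A.O j := hOg.1
    have hnI : v ∉ A.I j := fun hI => Set.disjoint_left.mp (A.disj_IO j) hI hOj
    have hcomp : v ∈ (toGTS A (s j)).comp σ k ↔
        v ∈ (σ k ∩ A.I j) ∪ ((s j).label ((s j).run σ k) ∩ A.Og j) := by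
      rw [show (toGTS A (s j)).comp σ k =
        (σ k ∩ A.I j) ∪ ((s j).label ((toGTS A (s j)).run σ k) ∩ A.Og j) from rfl, hrunG]
    rw [hv1, hcomp]
    simp only [Set.mem_union, Set.mem_inter_iff]
    constructor
    · rintro (⟨_, hI⟩ | ⟨hl, _⟩)
      · exact absurd hI hnI
      · exact hl
    · intro hl
      exact Or.inr ⟨hl, hOg⟩
  -- Step B: σ agrees with γ on the inputs of process i
  have hσI : ∀ l, σ l ∩ A.I i = γ l ∩ A.I i := by
    intro l
    ext v
    simp only [Set.mem_inter_iff, hσmem]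
    constructor
    · rintro ⟨h1 | h1 | h1, h2⟩
      · exact ⟨h1.1, h2⟩
      · exact absurd h2 (fun hI =>
          Set.disjoint_left.mp (A.disj_IO i) hI ((s i).label_sub _ h1))
      · exact absurd (Set.mem_union_left _ h2 : v ∈ A.Vars i) (hγ₀' l h1)
    · rintro ⟨h1, h2⟩
      exact ⟨Or.inl ⟨h1, h2⟩, h2⟩
  have hB : ∀ k, (s i).run σ k = (s i).run γ k := run_congr (s i) σ γ hσI
  have hσO : ∀ k v, v ∈ σ k → v ∈ A.O i → v ∈ (s i).label ((s i).run γ k) := by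
    intro k v hv hO
    rcases (hσmem k v).mp hv with ⟨_, hI⟩ | hl | hg
    · exact absurd hO (Set.disjoint_left.mp (A.disj_IO i) hI)
    · exact hl
    · exact absurd (Set.mem_union_right _ hO : v ∈ A.Vars i) (hγ₀' k hg)
  have hlabmem : ∀ k, (s i).label ((s i).run γ k) ⊆ σ k := by
    intro k v hv
    exact (hσmem k v).mpr (Or.inr (Or.inl hv))
  -- the environment input and the remaining valuation
  set γE : ℕ → Set V := fun k => σ k ∩ A.Oenv with hγEdef
  set γpp : ℕ → Set V := fun k => σ k ∩ (A.Oenv ∪ A.out)ᶜ with hγppdef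
  have hinp : ∀ j v, v ∈ A.I j → v ∈ A.inp := by
    intro j v hv
    exact Set.mem_iUnion.mpr ⟨j, hv⟩
  have hout : ∀ v, v ∈ A.inp → v ∉ A.Oenv → ∃ m, v ∈ A.O m := by
    intro v hv hne
    by_contra hcon
    push_neg at hcon
    have hmem : v ∈ A.inp \ A.out := ⟨hv, fun ho => by
      obtain ⟨m, hm⟩ := Set.mem_iUnion.mp ho
      exact hcon m hm⟩
    refine hne ?_
    rw [← A.env_eq]
    exact hmem
  -- forward and backward direction of the key input identity
  have hfwd : ∀ k j v, v ∈ A.I j →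
      (v ∈ γE k ∨ ∃ m, v ∈ (s m).label ((s m).run σ k)) → v ∈ σ k := by
    intro k j v hIj hv
    rcases hv with hv | ⟨m, hv⟩
    · exact hv.1
    · have hOm : v ∈ A.O m := (s m).label_sub _ hv
      have hOgm : v ∈ A.Og m := ⟨hOm, hinp j v hIj⟩
      by_cases hm : m = i
      · subst hm
        rw [hB] at hv
        exact hlabmem k hv
      · exact (hA m hm k v hOgm).mpr hv
  have hbwd : ∀ k j v, v ∈ A.I j → v ∈ σ k →
      (v ∈ γE k ∨ ∃ m, v ∈ (s m).label ((s m).run σ k)) := by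
    intro k j v hIj hv
    by_cases henv : v ∈ A.Oenv
    · exact Or.inl ⟨hv, henv⟩
    · obtain ⟨m, hOm⟩ := hout v (hinp j v hIj) henv
      have hOgm : v ∈ A.Og m := ⟨hOm, hinp j v hIj⟩
      refine Or.inr ⟨m, ?_⟩
      by_cases hm : m = i
      · subst hm
        rw [hB]
        exact hσO k v hv hOm
      · exact (hA m hm k v hOgm).mp hv
  have hKey : ∀ k j, (γE k ∩ A.Oenv ∪ ⋃ m, (s m).label ((s m).run σ k)) ∩ A.I j
      = σ k ∩ A.I j := by
    intro k j
    ext v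
    simp only [Set.mem_inter_iff, Set.mem_union, Set.mem_iUnion]
    constructor
    · rintro ⟨h1, h2⟩
      refine ⟨hfwd k j v h2 ?_, h2⟩
      rcases h1 with ⟨h1, _⟩ | h1
      · exact Or.inl h1
      · exact Or.inr h1
    · rintro ⟨h1, h2⟩
      refine ⟨?_, h2⟩
      rcases hbwd k j v h2 h1 with h | h
      · exact Or.inl ⟨h, h.2⟩
      · exact Or.inr h
  -- the run of the parallel composition
  have hC1 : ∀ k, (par A s).run γE k = fun j => (s j).run σ k := by
    intro k
    induction k with
    | zero => rfl
    | succ k ih =>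
        funext j
        show (par A s).trans ((par A s).run γE k) (γE k ∩ A.Oenv) j
          = (s j).trans ((s j).run σ k) (σ k ∩ A.I j)
        rw [ih]
        show (s j).trans ((s j).run σ k)
            ((γE k ∩ A.Oenv ∪ ⋃ m, (s m).label ((s m).run σ k)) ∩ A.I j) = _
        rw [hKey]
  -- the computation of the parallel composition agrees with σ on Vars i
  have hC2 : ∀ k v, v ∈ A.Vars i →
      (v ∈ (par A s).comp γE k ∪ γpp k ↔ v ∈ σ k) := by
    intro k v hvV
    have hparlab : (par A s).label ((par A s).run γE k)
        = ⋃ m, (s m).label ((s m).run σ k) := by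
      rw [hC1]; rfl
    have hw : v ∈ (par A s).comp γE k ∪ γpp k ↔
        (v ∈ γE k ∩ A.Oenv ∨ ∃ m, v ∈ (s m).label ((s m).run σ k)) ∨ v ∈ γpp k := by
      rw [show (par A s).comp γE k
        = (γE k ∩ A.Oenv) ∪ (par A s).label ((par A s).run γE k) from rfl, hparlab]
      simp [Set.mem_union, Set.mem_iUnion]
    rw [hw]
    constructor
    · rintro ((⟨h, -⟩ | ⟨m, h⟩) | h)
      · exact h.1
      · have hOm : v ∈ A.O m := (s m).label_sub _ h
        by_cases hm : m = i
        · subst hm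
          rw [hB] at h
          exact hlabmem k h
        · rcases hvV with hI | hO
          · exact (hA m hm k v ⟨hOm, hinp i v hI⟩).mpr h
          · exact absurd hO (Set.disjoint_left.mp (A.disj_O m i hm) hOm)
      · exact h.1
    · intro hv
      rcases hvV with hI | hO
      · rcases hbwd k i v hI hv with h | ⟨m, h⟩
        · exact Or.inl (Or.inl ⟨h, h.2⟩)
        · exact Or.inl (Or.inr ⟨m, h⟩)
      · refine Or.inl (Or.inr ⟨i, ?_⟩)
        rw [hB]
        exact hσO k v hv hO
  -- conclude using s₁ ∥ … ∥ sₙ ⊨ Φ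
  have hsatw := hsat γE γpp (fun k => Set.inter_subset_right)
    (fun k => Set.inter_subset_right)
  intro ξ hξ
  have hsub : ξ.props ⊆ A.Vars i := fun v hv => hprops i ⟨ξ, hξ, hv⟩
  have hwsat : LTL.sat (fun k => (par A s).comp γE k ∪ γpp k) ξ := hsatw ξ hξ.1
  exact (sat_congr ξ _ _ (fun k v hv => hC2 k v (hsub hv))).mp hwsat

end AuxProof

/-- **Conditional completeness of certifying synthesis with local strategies.** If
`s₁ ∥ … ∥ sₙ ⊨ φ` and `prop(φᵢ) ⊆ Vᵢ` holds for all system processes, then there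
exists a vector `G` of guarantee transition systems such that `(S',G)` is a solution
of certifying synthesis with local strategies for `φ`, where `s'ᵢ` is the restriction
of `sᵢ` w.r.t. `G`. -/
theorem conditional_completeness_local_strategies
    {V : Type} [Finite V] {n : ℕ} (A : Arch V n) (Φ : List (LTL V))
    (s : ∀ i, Strategy A i)
    (hsat : ParSat A s Φ)
    (hprops : ∀ i, propsDecomp A Φ i ⊆ A.Vars i) :
    ∃ g : ∀ i, GTS A i, ∀ s' : ∀ i, LocalStrategy A i,
      (∀ i, IsRestriction A g {j | j ≠ i} (s i) (s' i)) →
      CertSolLocal A Φ s' g := by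
  classical
  refine ⟨fun j => toGTS A (s j), ?_⟩
  intro s' hres i
  constructor
  · -- simulation of the restriction by the guarantee
    refine ⟨fun t₂ t₁ => ∃ γ k, (∀ l, γ l ⊆ A.I i) ∧ (s' i).prun γ k = some t₂ ∧
      (s i).run γ k = t₁, ⟨fun _ => ∅, 0, fun _ => Set.empty_subset _, rfl, rfl⟩, ?_, ?_⟩
    · rintro t₂ t₁ ⟨γ, k, hγ, h2, h1⟩
      have hsome : ((s' i).prun γ k).isSome := by rw [h2]; rfl
      have hcd := (hres i γ hγ).1 k hsome
      have e1 : (s' i).compD γ k = (γ k ∩ A.I i) ∪ (s' i).label t₂ := by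
        simp [PMoore.compD, h2]
      have hcd' : (γ k ∩ A.I i) ∪ (s' i).label t₂ = (γ k ∩ A.I i) ∪ (s i).label t₁ := by
        rw [← e1, hcd, Moore.comp, h1]
      have hlab : (s' i).label t₂ = (s i).label t₁ :=
        union_cancel (((A.disj_IO i).mono_left Set.inter_subset_right).mono_right
            ((s' i).label_sub t₂))
          (((A.disj_IO i).mono_left Set.inter_subset_right).mono_right
            ((s i).label_sub t₁)) hcd'
      show (s' i).label t₂ ∩ A.Og i = (s i).label t₁ ∩ A.Og i
      rw [hlab]
    · rintro t₂ t₁ a ha ⟨γ, k, hγ, h2, h1⟩ t₂' ht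
      refine ⟨fun l => if l < k then γ l else a, k + 1, ?_, ?_, ?_⟩
      · intro l
        by_cases h : l < k <;> simp [h, hγ l, ha]
      · have hpr : (s' i).prun (fun l => if l < k then γ l else a) k = some t₂ := by
          rw [prun_prefix (s' i) _ γ k (fun l hl => if_pos hl)]
          exact h2
        simp only [PMoore.prun, hpr, Option.bind_some, if_neg (lt_irrefl k),
          Set.inter_eq_self_of_subset_left ha]
        exact ht
      · show (s i).run (fun l => if l < k then γ l else a) (k + 1) = (s i).trans t₁ a
        simp only [Moore.run]
        rw [run_prefix (s i) _ γ k (fun l hl => if_pos hl), h1, if_neg (lt_irrefl k),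
          Set.inter_eq_self_of_subset_left ha]
  · -- runs of the specification automaton
    intro Aut hAut γ γ' hγ hγ' r hr0 hrstep
    by_cases hinf : (s' i).Inf γ
    · have hw : ∀ k, (s' i).pcomp γ γ' k = some ((s i).comp γ k ∪ γ' k) := by
        intro k
        obtain ⟨st, hst⟩ := Option.isSome_iff_exists.mp (hinf k)
        have e1 : (s' i).compD γ k = (γ k ∩ A.I i) ∪ (s' i).label st := by
          simp [PMoore.compD, hst]
        have hcd := (hres i γ hγ).1 k (hinf k)
        rw [e1] at hcd
        simp [PMoore.pcomp, hst, hcd]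
      obtain ⟨γ₀', hγ₀', hvalid⟩ := ((hres i γ hγ).2).mp hinf
      have hdec := key_satDecomp A Φ s hsat hprops i γ γ₀' hγ hγ₀' hvalid
      have hdec' : satDecomp A Φ i (cword A (s i) γ γ') := by
        intro ξ hξ
        have hsub : ξ.props ⊆ A.Vars i := fun v hv => hprops i ⟨ξ, hξ, hv⟩
        refine (sat_congr ξ _ _ ?_).mp (hdec ξ hξ)
        intro k v hv
        have hvV := hsub hv
        simp only [cword, Set.mem_union]
        constructor
        · rintro (h | h)
          · exact Or.inl h
          · exact absurd hvV (hγ₀' k h)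
        · rintro (h | h)
          · exact Or.inl h
          · exact absurd hvV (hγ' k h)
      have hacc := (hAut _).mpr hdec' r hr0 (fun k => hrstep k _ (hw k))
      exact hacc.subset fun k hk => hk.1
    · obtain ⟨k, hk⟩ : ∃ k, (s' i).prun γ k = none := by
        simp only [PMoore.Inf, not_forall] at hinf
        obtain ⟨k, hk⟩ := hinf
        exact ⟨k, Option.not_isSome_iff_eq_none.mp hk⟩
      apply Set.Finite.subset (Set.finite_Iic k)
      rintro m ⟨-, hm⟩
      by_contra hmk
      have hlt : k < m := lt_of_not_ge hmk
      have := hm k hlt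
      rw [PMoore.pcomp, hk] at this
      simp at this


end CertSynth
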